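/- Let p_1 < p_2 < ... < p_k be primes and let E_1, ..., E_k be infinite sets of positive natural numbers. Let N = N(p_1, ..., p_k, E_1, ..., E_k) be the set of all natural numbers n such that for each i = 1, ..., k the exponent of p_i in the canonical factorization of n lies in E_i, i.e. v_{p_i}(n) ∈ E_i. Then N is Buck measurable and μ(N) = ∏_{i=1}^k (1 - 1/p_i) · ∏_{i=1}^k Σ_{n_i ∈ E_i} 1/p_i^{n_i}. -/

import Mathlib

open scoped BigOperators

/-- Buck's measure density: the infimum of `∑ 1/mᵢ` over finite covers of `S`
by arithmetic progressions `{n | n ≡ rᵢ [MOD mᵢ]}`. -/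
noncomputable def buckDensity (S : Set ℕ) : ℝ :=
  sInf {x : ℝ | ∃ (k : ℕ) (r m : Fin k → ℕ), (∀ i, 0 < m i) ∧
    (S ⊆ ⋃ i, {n : ℕ | n ≡ r i [MOD m i]}) ∧ x = ∑ i, (1 : ℝ) / (m i)}

/-- A set is Buck measurable if `μ*(S) + μ*(ℕ \ S) = 1`. -/
def BuckMeasurable (S : Set ℕ) : Prop :=
  buckDensity S + buckDensity Sᶜ = 1

/-- `R(S : m)`: the number of residue classes modulo `m` occupied by `S`. -/
noncomputable def residueCount (S : Set ℕ) (m : ℕ) : ℕ :=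
  ((fun s => s % m) '' S).ncard

/-!
Fix a level `M`. If `pᵢ ^ M ∤ n` then `v_{pᵢ}(n % pᵢ ^ M) = v_{pᵢ}(n)`, so `N` contains the
periodic set where every residue `n % pᵢ ^ M` is nonzero with valuation in `Eᵢ`, and is contained
in the one that also admits the residue `0`. By the Chinese remainder theorem their densities are
`∏ (1 - 1/pᵢ) ∑_{e < M, e ∈ Eᵢ} pᵢ^{-e}` and the same product with `pᵢ^{-M}` added to each
factor; both tend to the claimed value. Finally `μ*(S) + μ*(Sᶜ) ≥ 1` for every `S`: joining
covers of `S` and `Sᶜ` covers `ℕ`, and counting residues in one common period shows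
`∑ 1/mᵢ ≥ 1` for such a cover.
-/

open Finset Filter Topology
open scoped Function

def buckCoverSums (S : Set ℕ) : Set ℝ :=
  {x : ℝ | ∃ (k : ℕ) (r m : Fin k → ℕ), (∀ i, 0 < m i) ∧
    (S ⊆ ⋃ i, {n : ℕ | n ≡ r i [MOD m i]}) ∧ x = ∑ i, (1 : ℝ) / (m i)}

lemma buckDensity_eq_sInf (S : Set ℕ) : buckDensity S = sInf (buckCoverSums S) := rfl

lemma buckCoverSums_nonempty (S : Set ℕ) : (buckCoverSums S).Nonempty :=
  ⟨1, 1, fun _ => 0, fun _ => 1, fun _ => one_pos,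
    fun _ _ => Set.mem_iUnion.mpr ⟨0, Nat.modEq_one⟩, by simp⟩

lemma buckCoverSums_bddBelow (S : Set ℕ) : BddBelow (buckCoverSums S) :=
  ⟨0, by rintro _ ⟨k, r, m, -, -, rfl⟩; positivity⟩

lemma buckDensity_mono {S T : Set ℕ} (h : S ⊆ T) : buckDensity S ≤ buckDensity T :=
  csInf_le_csInf (buckCoverSums_bddBelow S) (buckCoverSums_nonempty T)
    fun _ ⟨k, r, m, hm, hT, hx⟩ => ⟨k, r, m, hm, h.trans hT, hx⟩

lemma buckDensity_setOf_mod_le {P : ℕ} (hP : 0 < P) (Q : ℕ → Prop) [DecidablePred Q] :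
    buckDensity {n | Q (n % P)} ≤ #{r ∈ range P | Q r} / P := by
  set R := {r ∈ range P | Q r}
  refine csInf_le (buckCoverSums_bddBelow _)
    ⟨#R, fun j => R.equivFin.symm j, fun _ => P, fun _ => hP, fun n hn => ?_, ?_⟩
  · have hnR : n % P ∈ R := mem_filter.mpr ⟨mem_range.mpr (Nat.mod_lt n hP), hn⟩
    exact Set.mem_iUnion.mpr ⟨R.equivFin ⟨n % P, hnR⟩, by simpa using (Nat.mod_modEq n P).symm⟩
  · simp [div_eq_mul_inv]

lemma buckDensity_compl_setOf_mod_le {P : ℕ} (hP : 0 < P) (Q : ℕ → Prop) [DecidablePred Q] :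
    buckDensity {n | Q (n % P)}ᶜ ≤ 1 - #{r ∈ range P | Q r} / P := by
  have hcard := card_filter_add_card_filter_not (s := range P) Q
  rw [card_range] at hcard
  have hP' : (P : ℝ) ≠ 0 := by positivity
  calc buckDensity {n | Q (n % P)}ᶜ ≤ #{r ∈ range P | ¬Q r} / P :=
        buckDensity_setOf_mod_le hP (fun r => ¬Q r)
    _ = 1 - #{r ∈ range P | Q r} / P := by
        rw [eq_sub_iff_add_eq, ← add_div, ← Nat.cast_add, add_comm, hcard, div_self hP']

lemma card_filter_range_modEq {L m : ℕ} (hm : 0 < m) (hmL : m ∣ L) (r : ℕ) :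
    #{n ∈ range L | n ≡ r [MOD m]} = L / m := by
  rw [← Nat.count_eq_card_filter_range, Nat.count_modEq_card _ hm, Nat.mod_eq_zero_of_dvd hmL]
  simp

lemma one_le_sum_inv_of_forall_modEq {ι : Type*} [Fintype ι] (r m : ι → ℕ) (hm : ∀ i, 0 < m i)
    (hcov : ∀ n, ∃ i, n ≡ r i [MOD m i]) : 1 ≤ ∑ i, (1 : ℝ) / m i := by
  set L := ∏ i, m i
  have hL : 0 < L := prod_pos fun i _ => hm i
  have hdvd : ∀ i, m i ∣ L := fun i => dvd_prod_of_mem m (mem_univ i)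
  have hcount : L ≤ ∑ i, L / m i := calc
    L = #(range L) := (card_range L).symm
    _ ≤ #(univ.biUnion fun i => {n ∈ range L | n ≡ r i [MOD m i]}) := card_le_card fun n hn =>
        let ⟨i, hi⟩ := hcov n; mem_biUnion.mpr ⟨i, mem_univ i, mem_filter.mpr ⟨hn, hi⟩⟩
    _ ≤ ∑ i, #{n ∈ range L | n ≡ r i [MOD m i]} := card_biUnion_le
    _ = ∑ i, L / m i := sum_congr rfl fun i _ => card_filter_range_modEq (hm i) (hdvd i) (r i)
  have hcount' : (L : ℝ) * 1 ≤ L * ∑ i, (1 : ℝ) / m i := calc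
    (L : ℝ) * 1 ≤ ((∑ i, L / m i : ℕ) : ℝ) := by rw [mul_one]; exact_mod_cast hcount
    _ = L * ∑ i, (1 : ℝ) / m i := by
        rw [mul_sum, Nat.cast_sum]
        refine sum_congr rfl fun i _ => ?_
        rw [Nat.cast_div (hdvd i) (Nat.cast_ne_zero.mpr (hm i).ne'), mul_one_div]
  exact le_of_mul_le_mul_left hcount' (Nat.cast_pos.mpr hL)

lemma one_le_add_of_mem_buckCoverSums {S : Set ℕ} {x y : ℝ} (hx : x ∈ buckCoverSums S)
    (hy : y ∈ buckCoverSums Sᶜ) : 1 ≤ x + y := by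
  obtain ⟨k, r, m, hm, hS, rfl⟩ := hx
  obtain ⟨l, r', m', hm', hSc, rfl⟩ := hy
  have hcov : ∀ n, ∃ i, n ≡ Sum.elim r r' i [MOD Sum.elim m m' i] := fun n => by
    by_cases hn : n ∈ S
    · obtain ⟨i, hi⟩ := Set.mem_iUnion.mp (hS hn)
      exact ⟨Sum.inl i, hi⟩
    · obtain ⟨i, hi⟩ := Set.mem_iUnion.mp (hSc hn)
      exact ⟨Sum.inr i, hi⟩
  simpa using one_le_sum_inv_of_forall_modEq _ _ (Sum.forall.mpr ⟨hm, hm'⟩) hcov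

lemma one_le_buckDensity_add_compl (S : Set ℕ) : 1 ≤ buckDensity S + buckDensity Sᶜ := by
  rw [buckDensity_eq_sInf, buckDensity_eq_sInf, ← csInf_add (buckCoverSums_nonempty _)
    (buckCoverSums_bddBelow _) (buckCoverSums_nonempty _) (buckCoverSums_bddBelow _)]
  exact le_csInf ((buckCoverSums_nonempty _).add (buckCoverSums_nonempty _))
    fun _ ⟨_, hx, _, hy, hxy⟩ => hxy ▸ one_le_add_of_mem_buckCoverSums hx hy

lemma buckMeasurable_of_tendsto {S : Set ℕ} {A : ℝ} {u v : ℕ → ℝ}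
    (hu : ∀ M, buckDensity S ≤ u M) (hv : ∀ M, buckDensity Sᶜ ≤ v M)
    (hu_lim : Tendsto u atTop (𝓝 A)) (hv_lim : Tendsto v atTop (𝓝 (1 - A))) :
    BuckMeasurable S ∧ buckDensity S = A := by
  have hS := ge_of_tendsto' hu_lim hu
  have hSc := ge_of_tendsto' hv_lim hv
  have := one_le_buckDensity_add_compl S
  exact ⟨by unfold BuckMeasurable; linarith, by linarith⟩

lemma card_filter_range_prod_forall_mod {ι : Type*} [Fintype ι] [DecidableEq ι] (m : ι → ℕ)
    (hm : ∀ i, m i ≠ 0) (hcop : Pairwise (Nat.Coprime on m)) (Q : ι → ℕ → Prop)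
    [∀ i, DecidablePred (Q i)] :
    #{r ∈ range (∏ i, m i) | ∀ i, Q i (r % m i)} = ∏ i, #{s ∈ range (m i) | Q i s} := by
  rw [← Fintype.card_piFinset]
  refine card_bij (fun r _ i => r % m i) (fun r hr => ?_) (fun a ha b hb hab => ?_) (fun w hw => ?_)
  · simp only [mem_filter, mem_range, Fintype.mem_piFinset] at hr ⊢
    exact fun i => ⟨Nat.mod_lt r (Nat.pos_of_ne_zero (hm i)), hr.2 i⟩
  · have : (a : ZMod (∏ i, m i)) = b := (ZMod.prodEquivPi m hcop).injective <| funext fun i => by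
      simpa [ZMod.natCast_eq_natCast_iff'] using congrFun hab i
    rwa [ZMod.natCast_eq_natCast_iff', Nat.mod_eq_of_lt (mem_range.mp (mem_filter.mp ha).1),
      Nat.mod_eq_of_lt (mem_range.mp (mem_filter.mp hb).1)] at this
  · simp only [Fintype.mem_piFinset, mem_filter, mem_range] at hw
    let r := Nat.chineseRemainderOfFinset w m univ (fun i _ => hm i) (hcop.set_pairwise _)
    have hrw : ∀ i, r % m i = w i := fun i =>
      Eq.trans (r.2 i (mem_univ i)) (Nat.mod_eq_of_lt (hw i).1)
    refine ⟨r, mem_filter.mpr ⟨mem_range.mpr ?_, fun i => (hrw i).symm ▸ (hw i).2⟩, funext hrw⟩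
    exact Nat.chineseRemainderOfFinset_lt_prod w m (fun i _ => hm i) (hcop.set_pairwise _)

lemma setOf_forall_mod_eq_setOf_prod_mod {ι : Type*} [Fintype ι] (m : ι → ℕ) (Q : ι → ℕ → Prop) :
    {n | ∀ i, Q i (n % m i)} = {n | ∀ i, Q i (n % (∏ j, m j) % m i)} := by
  simp only [Nat.mod_mod_of_dvd _ (dvd_prod_of_mem m (mem_univ _))]

section CoprimeModuli

variable {ι : Type*} [Fintype ι] [DecidableEq ι] {m : ι → ℕ} (hm : ∀ i, m i ≠ 0)
  (hcop : Pairwise (Nat.Coprime on m)) (Q : ι → ℕ → Prop) [∀ i, DecidablePred (Q i)]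
include hm hcop

lemma card_filter_range_prod_forall_mod_div :
    (#{r ∈ range (∏ i, m i) | ∀ i, Q i (r % m i)} : ℝ) / (∏ i, m i : ℕ) =
      ∏ i, (#{s ∈ range (m i) | Q i s} : ℝ) / m i := by
  rw [card_filter_range_prod_forall_mod m hm hcop Q]
  push_cast
  rw [prod_div_distrib]

lemma buckDensity_setOf_forall_mod_le :
    buckDensity {n | ∀ i, Q i (n % m i)} ≤ ∏ i, (#{s ∈ range (m i) | Q i s} : ℝ) / m i := by
  rw [setOf_forall_mod_eq_setOf_prod_mod m Q, ← card_filter_range_prod_forall_mod_div hm hcop]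
  exact buckDensity_setOf_mod_le (prod_pos fun i _ => Nat.pos_of_ne_zero (hm i))
    fun r => ∀ i, Q i (r % m i)

lemma buckDensity_compl_setOf_forall_mod_le :
    buckDensity {n | ∀ i, Q i (n % m i)}ᶜ ≤ 1 - ∏ i, (#{s ∈ range (m i) | Q i s} : ℝ) / m i := by
  rw [setOf_forall_mod_eq_setOf_prod_mod m Q, ← card_filter_range_prod_forall_mod_div hm hcop]
  exact buckDensity_compl_setOf_mod_le (prod_pos fun i _ => Nat.pos_of_ne_zero (hm i))
    fun r => ∀ i, Q i (r % m i)

end CoprimeModuli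

noncomputable def truncatedValDensity (p : ℕ) (E : Set ℕ) (M : ℕ) : ℝ :=
  (1 - 1 / p) * ∑ e ∈ range M, E.indicator (fun e => 1 / (p : ℝ) ^ e) e

lemma tendsto_truncatedValDensity {p : ℕ} (hp : 1 < p) (E : Set ℕ) :
    Tendsto (truncatedValDensity p E) atTop
      (𝓝 ((1 - 1 / p) * ∑' e : E, 1 / (p : ℝ) ^ (e : ℕ))) := by
  have hgeom : Summable fun e : ℕ => 1 / (p : ℝ) ^ e := by
    simpa only [one_div_pow] using summable_geometric_of_lt_one (by positivity)
      ((div_lt_one (by positivity)).mpr (Nat.one_lt_cast.mpr hp))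
  exact (hasSum_subtype_iff_indicator.mp (hgeom.subtype E).hasSum).tendsto_sum_nat.const_mul _

lemma padicValNat_lt_of_lt_pow {p s M : ℕ} (hs : s ≠ 0) (h : s < p ^ M) : padicValNat p s < M :=
  (padicValNat_le_nat_log s).trans_lt (Nat.log_lt_of_lt_pow hs h)

section Padic

variable {p : ℕ} [hp : Fact p.Prime]

lemma padicValNat_mod_pow_of_ne_zero {n M : ℕ} (h : n % p ^ M ≠ 0) :
    padicValNat p (n % p ^ M) = padicValNat p n := by
  have hn : n ≠ 0 := by rintro rfl; simp at h
  have hlt := padicValNat_lt_of_lt_pow h (Nat.mod_lt n (pow_pos hp.out.pos M))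
  have hdvd : ∀ e ≤ M, p ^ e ∣ n % p ^ M ↔ p ^ e ∣ n := fun e he =>
    Nat.dvd_mod_iff (pow_dvd_pow p he)
  apply le_antisymm
  · exact (padicValNat_dvd_iff_le hn).mp ((hdvd _ hlt.le).mp pow_padicValNat_dvd)
  · by_contra! hv
    exact pow_succ_padicValNat_not_dvd h ((hdvd _ hlt).mpr ((padicValNat_dvd_iff_le hn).mpr hv))

lemma card_filter_range_pow_dvd {M e : ℕ} (he : e ≤ M) :
    #{s ∈ range (p ^ M) | p ^ e ∣ s} = p ^ (M - e) := by
  have h := card_filter_range_modEq (pow_pos hp.out.pos e) (pow_dvd_pow p he) 0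
  simp only [Nat.modEq_zero_iff_dvd] at h
  rw [h, Nat.pow_div he hp.out.pos]

lemma card_filter_range_pow_padicValNat_eq {M e : ℕ} (he : e < M) :
    (#{s ∈ range (p ^ M) | s ≠ 0 ∧ padicValNat p s = e} : ℝ) =
      p ^ M * (1 - 1 / p) * (1 / p ^ e) := by
  have hfiber : {s ∈ range (p ^ M) | s ≠ 0 ∧ padicValNat p s = e} =
      {s ∈ range (p ^ M) | p ^ e ∣ s} \ {s ∈ range (p ^ M) | p ^ (e + 1) ∣ s} := by
    ext s
    simp only [Finset.mem_sdiff, mem_filter, mem_range]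
    rw [padicValNat_dvd_iff, padicValNat_dvd_iff]
    omega
  have hsub : {s ∈ range (p ^ M) | p ^ (e + 1) ∣ s} ⊆ {s ∈ range (p ^ M) | p ^ e ∣ s} :=
    monotone_filter_right _ fun _ _ h => (pow_dvd_pow p e.le_succ).trans h
  rw [hfiber, card_sdiff_of_subset hsub, Nat.cast_sub (card_le_card hsub),
    card_filter_range_pow_dvd he.le, card_filter_range_pow_dvd he]
  obtain ⟨j, rfl⟩ : ∃ j, M = e + 1 + j := ⟨M - (e + 1), by omega⟩
  rw [show e + 1 + j - e = j + 1 by omega, show e + 1 + j - (e + 1) = j by omega]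
  have : (p : ℝ) ≠ 0 := Nat.cast_ne_zero.mpr hp.out.ne_zero
  push_cast
  field_simp
  ring

lemma card_filter_range_pow_padicValNat_mem (E : Set ℕ) [DecidablePred (· ∈ E)] (M : ℕ) :
    (#{s ∈ range (p ^ M) | s ≠ 0 ∧ padicValNat p s ∈ E} : ℝ) =
      p ^ M * truncatedValDensity p E M := by
  have hmaps : ∀ s ∈ {s ∈ range (p ^ M) | s ≠ 0 ∧ padicValNat p s ∈ E},
      padicValNat p s ∈ range M := fun s hs => by
    simp only [mem_filter, mem_range] at hs
    exact mem_range.mpr (padicValNat_lt_of_lt_pow hs.2.1 hs.1)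
  rw [card_eq_sum_card_fiberwise hmaps, Nat.cast_sum, truncatedValDensity, ← mul_assoc, mul_sum]
  refine sum_congr rfl fun e he => ?_
  rw [filter_filter]
  by_cases heE : e ∈ E
  · rw [Set.indicator_of_mem heE, ← card_filter_range_pow_padicValNat_eq (mem_range.mp he)]
    congr 2
    exact filter_congr fun s _ => ⟨fun h => ⟨h.1.1, h.2⟩, fun h => ⟨⟨h.1, h.2 ▸ heE⟩, h.2⟩⟩
  · rw [Set.indicator_of_notMem heE, mul_zero, Nat.cast_eq_zero, card_eq_zero,
      filter_eq_empty_iff]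
    exact fun s _ h => heE (h.2 ▸ h.1.2)

end Padic

section ValuationConditions

variable {k : ℕ} {p : Fin k → ℕ} (hp : ∀ i, (p i).Prime) (hinj : Function.Injective p)
  (E : Fin k → Set ℕ) (M : ℕ)
include hp hinj

lemma pairwise_coprime_pow : Pairwise (Nat.Coprime on fun i => p i ^ M) := fun i j hij =>
  Nat.Coprime.pow _ _ ((Nat.coprime_primes (hp i) (hp j)).mpr (hinj.ne hij))

lemma buckDensity_setOf_padicValNat_mem_le :
    buckDensity {n | ∀ i, padicValNat (p i) n ∈ E i} ≤
      ∏ i, (truncatedValDensity (p i) (E i) M + 1 / (p i : ℝ) ^ M) := by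
  classical
  have := fun i => Fact.mk (hp i)
  have hsub : {n | ∀ i, padicValNat (p i) n ∈ E i} ⊆
      {n | ∀ i, n % p i ^ M = 0 ∨ n % p i ^ M ≠ 0 ∧ padicValNat (p i) (n % p i ^ M) ∈ E i} :=
    fun n hn i => (em _).imp id fun h => ⟨h, (padicValNat_mod_pow_of_ne_zero h).symm ▸ hn i⟩
  refine (buckDensity_mono hsub).trans <| (buckDensity_setOf_forall_mod_le
    (fun i => (pow_pos (hp i).pos M).ne') (pairwise_coprime_pow hp hinj M)
    fun i s => s = 0 ∨ s ≠ 0 ∧ padicValNat (p i) s ∈ E i).trans_eq <| prod_congr rfl fun i _ => ?_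
  have hinsert : {s ∈ range (p i ^ M) | s = 0 ∨ s ≠ 0 ∧ padicValNat (p i) s ∈ E i} =
      insert 0 {s ∈ range (p i ^ M) | s ≠ 0 ∧ padicValNat (p i) s ∈ E i} := by
    ext s
    rcases eq_or_ne s 0 with rfl | hs <;> simp [*, pow_pos (hp i).pos M]
  have : (p i : ℝ) ≠ 0 := Nat.cast_ne_zero.mpr (hp i).ne_zero
  rw [hinsert, card_insert_of_notMem (by simp), Nat.cast_add,
    card_filter_range_pow_padicValNat_mem, Nat.cast_pow, Nat.cast_one]
  field_simp

lemma buckDensity_compl_setOf_padicValNat_mem_le :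
    buckDensity {n | ∀ i, padicValNat (p i) n ∈ E i}ᶜ ≤
      1 - ∏ i, truncatedValDensity (p i) (E i) M := by
  classical
  have := fun i => Fact.mk (hp i)
  have hsub : {n | ∀ i, n % p i ^ M ≠ 0 ∧ padicValNat (p i) (n % p i ^ M) ∈ E i} ⊆
      {n | ∀ i, padicValNat (p i) n ∈ E i} :=
    fun n hn i => padicValNat_mod_pow_of_ne_zero (hn i).1 ▸ (hn i).2
  refine (buckDensity_mono (Set.compl_subset_compl.mpr hsub)).trans <|
    (buckDensity_compl_setOf_forall_mod_le (fun i => (pow_pos (hp i).pos M).ne')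
    (pairwise_coprime_pow hp hinj M) fun i s => s ≠ 0 ∧ padicValNat (p i) s ∈ E i).trans_eq ?_
  have : ∀ i, (p i : ℝ) ≠ 0 := fun i => Nat.cast_ne_zero.mpr (hp i).ne_zero
  congr 1
  refine prod_congr rfl fun i _ => ?_
  rw [card_filter_range_pow_padicValNat_mem, Nat.cast_pow,
    mul_div_cancel_left₀ _ (pow_ne_zero _ (this i))]

end ValuationConditions

theorem stmt_5_general (k : ℕ) (p : Fin k → ℕ) (hp : ∀ i, (p i).Prime)
    (hmono : StrictMono p) (E : Fin k → Set ℕ) :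
    BuckMeasurable {n : ℕ | ∀ i, padicValNat (p i) n ∈ E i} ∧
      buckDensity {n : ℕ | ∀ i, padicValNat (p i) n ∈ E i} =
        (∏ i, (1 - 1 / (p i : ℝ))) *
          ∏ i, ∑' e : E i, (1 : ℝ) / (p i : ℝ) ^ (e : ℕ) := by
  have hdens := fun i => tendsto_truncatedValDensity (hp i).one_lt (E i)
  have hpow : ∀ i, Tendsto (fun M => 1 / (p i : ℝ) ^ M) atTop (𝓝 0) := fun i => by
    simpa only [one_div, Function.comp_def] using tendsto_inv_atTop_zero.comp
      (tendsto_pow_atTop_atTop_of_one_lt (Nat.one_lt_cast.mpr (hp i).one_lt))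
  rw [← prod_mul_distrib]
  exact buckMeasurable_of_tendsto (buckDensity_setOf_padicValNat_mem_le hp hmono.injective E)
    (buckDensity_compl_setOf_padicValNat_mem_le hp hmono.injective E)
    (by simpa using tendsto_finsetProd _ fun i _ => (hdens i).add (hpow i))
    (tendsto_const_nhds.sub (tendsto_finsetProd _ fun i _ => hdens i))

theorem stmt_5 (k : ℕ) (p : Fin k → ℕ) (hp : ∀ i, (p i).Prime)
    (hmono : StrictMono p) (E : Fin k → Set ℕ)
    (hEinf : ∀ i, (E i).Infinite) (hEpos : ∀ i, ∀ e ∈ E i, 0 < e) :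
    BuckMeasurable {n : ℕ | ∀ i, padicValNat (p i) n ∈ E i} ∧
      buckDensity {n : ℕ | ∀ i, padicValNat (p i) n ∈ E i} =
        (∏ i, (1 - 1 / (p i : ℝ))) *
          ∏ i, ∑' e : E i, (1 : ℝ) / (p i : ℝ) ^ (e : ℕ) :=
  stmt_5_general k p hp hmono E
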